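/- arXiv:2307.03919 — 8 statements merged into one kernel-verified Lean document; each statement's English description precedes it below -/
import Mathlib

section
/- For every integer k ≥ 2, the polynomial Φ_k(x) = x^k - 2x^{k-1} - x^{k-2} - ⋯ - x - 1 has exactly one real root γ(k) with γ(k) > 1, and this root satisfies φ^2(1 - φ^{-k}) < γ(k) < φ^2, where φ = (1+√5)/2. -/
/-! Since `(x - 1) Φ_k(x) = x^{k-1}(x² - 3x + 1) + 1` and `φ²` is a root of `x² - 3x + 1`,
`Φ_k(φ²) > 0`. At `a = φ²(1 - φ^{-k}) = φ² - c` with `c = φ^{2-k} ≤ 1` one finds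
`a² - 3a + 1 = -c(√5 - c)`, and `a^{k-1} c (√5 - c) ≥ φ^{k-1} c (√5 - 1) = φ(√5 - 1) = 2`,
so `Φ_k(a) < 0` and the intermediate value theorem gives a root in `(a, φ²)`.
Uniqueness and the bounds for every root `γ > 1` both follow from the fact that
`Φ_k(x)/x^k = 1 - 2/x - ∑_{i<k-1} x^{-(k-i)}` is strictly increasing on `(0, ∞)`. -/

/-- Φ_k(x) = x^k - 2x^{k-1} - x^{k-2} - ⋯ - x - 1, the characteristic polynomial
of the k-generalized Pell sequence. -/
noncomputable def Phi (k : ℕ) (x : ℝ) : ℝ :=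
  x ^ k - 2 * x ^ (k - 1) - ∑ i ∈ Finset.range (k - 1), x ^ i

open Real goldenRatio Set

theorem continuous_Phi (k : ℕ) : Continuous (Phi k) := by
  unfold Phi
  fun_prop

theorem sub_one_mul_Phi {k : ℕ} (hk : 1 ≤ k) (x : ℝ) :
    (x - 1) * Phi k x = x ^ (k - 1) * (x ^ 2 - 3 * x + 1) + 1 := by
  obtain ⟨m, rfl⟩ := Nat.exists_eq_add_of_le' hk
  simp only [Phi, Nat.add_sub_cancel]
  linear_combination (-1 : ℝ) * geom_sum_mul x m

theorem Phi_div_pow_eq {k : ℕ} (hk : 1 ≤ k) {x : ℝ} (hx : x ≠ 0) :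
    Phi k x / x ^ k = 1 - 2 * x⁻¹ - ∑ i ∈ Finset.range (k - 1), x⁻¹ ^ (k - i) := by
  obtain ⟨m, rfl⟩ := Nat.exists_eq_add_of_le' hk
  simp only [Phi, Nat.add_sub_cancel, sub_div, Finset.sum_div]
  congr 1
  · field_simp
    ring
  · refine Finset.sum_congr rfl fun i hi => ?_
    have him : i < m := Finset.mem_range.mp hi
    rw [inv_pow, ← one_div, div_eq_div_iff (pow_ne_zero _ hx) (pow_ne_zero _ hx),
      one_mul, ← pow_add]
    congr 1
    omega

theorem strictMonoOn_Phi_div_pow {k : ℕ} (hk : 1 ≤ k) :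
    StrictMonoOn (fun x => Phi k x / x ^ k) (Ioi 0) := by
  intro x (hx : 0 < x) y (hy : 0 < y) hxy
  simp only [Phi_div_pow_eq hk hx.ne', Phi_div_pow_eq hk hy.ne']
  have hinv : y⁻¹ < x⁻¹ := (inv_lt_inv₀ hy hx).2 hxy
  have hsum : ∑ i ∈ Finset.range (k - 1), y⁻¹ ^ (k - i) ≤
      ∑ i ∈ Finset.range (k - 1), x⁻¹ ^ (k - i) :=
    Finset.sum_le_sum fun i _ => pow_le_pow_left₀ (inv_pos.2 hy).le hinv.le _
  linarith

theorem Phi_neg_iff_lt_of_Phi_eq_zero {k : ℕ} (hk : 1 ≤ k) {x γ : ℝ} (hx : 0 < x) (hγ : 0 < γ)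
    (hγ0 : Phi k γ = 0) : Phi k x < 0 ↔ x < γ := by
  have h := (strictMonoOn_Phi_div_pow hk).lt_iff_lt hx hγ
  simp only [hγ0, zero_div] at h
  rw [← h, div_lt_iff₀ (pow_pos hx k), zero_mul]

theorem Phi_pos_iff_lt_of_Phi_eq_zero {k : ℕ} (hk : 1 ≤ k) {x γ : ℝ} (hx : 0 < x) (hγ : 0 < γ)
    (hγ0 : Phi k γ = 0) : 0 < Phi k x ↔ γ < x := by
  have h := (strictMonoOn_Phi_div_pow hk).lt_iff_lt hγ hx
  simp only [hγ0, zero_div] at h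
  rw [← h, lt_div_iff₀ (pow_pos hx k), zero_mul]

theorem Phi_goldenRatio_sq_pos {k : ℕ} (hk : 1 ≤ k) : 0 < Phi k (φ ^ 2) := by
  have h := sub_one_mul_Phi hk (φ ^ 2)
  have hroot : (φ ^ 2) ^ 2 - 3 * φ ^ 2 + 1 = 0 := by
    linear_combination (φ ^ 2 + φ - 1) * goldenRatio_sq
  rw [hroot, mul_zero, zero_add, show φ ^ 2 - 1 = φ by linarith [goldenRatio_sq]] at h
  exact pos_of_mul_pos_right (by rw [h]; exact one_pos) goldenRatio_pos.le

theorem goldenRatio_sq_mul_zpow_neg_le_one {k : ℕ} (hk : 2 ≤ k) :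
    φ ^ 2 * φ ^ (-(k : ℤ)) ≤ 1 := by
  rw [zpow_neg, zpow_natCast, ← div_eq_mul_inv, div_le_one (pow_pos goldenRatio_pos k)]
  exact pow_le_pow_right₀ one_lt_goldenRatio.le hk

theorem goldenRatio_le_goldenRatio_sq_mul_one_sub {k : ℕ} (hk : 2 ≤ k) :
    φ ≤ φ ^ 2 * (1 - φ ^ (-(k : ℤ))) := by
  have := goldenRatio_sq_mul_zpow_neg_le_one hk
  linear_combination this - goldenRatio_sq

theorem Phi_goldenRatio_sq_mul_one_sub_neg {k : ℕ} (hk : 2 ≤ k) :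
    Phi k (φ ^ 2 * (1 - φ ^ (-(k : ℤ)))) < 0 := by
  set c := φ ^ 2 * φ ^ (-(k : ℤ)) with hc
  set a := φ ^ 2 * (1 - φ ^ (-(k : ℤ)))
  have hac : a = φ ^ 2 - c := by ring
  have hc0 : 0 < c := by positivity
  have hc1 : c ≤ 1 := goldenRatio_sq_mul_zpow_neg_le_one hk
  have hφa : φ ≤ a := goldenRatio_le_goldenRatio_sq_mul_one_sub hk
  have hs : √5 = 2 * φ - 1 := by rw [goldenRatio]; ring
  have hquad : a ^ 2 - 3 * a + 1 = -(c * (√5 - c)) := by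
    rw [hac, hs]
    linear_combination (φ ^ 2 + φ - 1 - 2 * c) * goldenRatio_sq
  have hφc : φ ^ (k - 1) * c = φ := by
    rw [hc, zpow_neg, zpow_natCast, ← mul_assoc, ← pow_add, show k - 1 + 2 = k + 1 by omega,
      pow_succ, mul_comm (φ ^ k), mul_assoc, mul_inv_cancel₀ (pow_ne_zero _ goldenRatio_ne_zero),
      mul_one]
  have hprod : 2 ≤ a ^ (k - 1) * c * (√5 - c) := calc
    2 = φ ^ (k - 1) * c * (√5 - 1) := by rw [hφc, hs]; linear_combination (-2) * goldenRatio_sq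
    _ ≤ a ^ (k - 1) * c * (√5 - c) := by
      have : 0 ≤ √5 - 1 := by rw [hs]; linarith [one_lt_goldenRatio]
      gcongr
      exact mul_nonneg (pow_nonneg (by linarith [goldenRatio_pos]) _) hc0.le
  have hsign : (a - 1) * Phi k a < 0 := by
    rw [sub_one_mul_Phi (by omega), hquad]
    linarith
  exact neg_of_mul_neg_right hsign (by linarith [one_lt_goldenRatio])

/-- For every k ≥ 2, Φ_k has exactly one real root γ with γ > 1, and this root
satisfies φ²(1 - φ^{-k}) < γ < φ², where φ is the golden ratio. -/
theorem pell_char_poly_dominant_root (k : ℕ) (hk : 2 ≤ k) :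
    (∃! γ : ℝ, 1 < γ ∧ Phi k γ = 0) ∧
      ∀ γ : ℝ, 1 < γ → Phi k γ = 0 →
        ((1 + Real.sqrt 5) / 2) ^ 2 * (1 - ((1 + Real.sqrt 5) / 2) ^ (-(k : ℤ))) < γ ∧
          γ < ((1 + Real.sqrt 5) / 2) ^ 2 := by
  have hk1 : 1 ≤ k := by omega
  set a := φ ^ 2 * (1 - φ ^ (-(k : ℤ)))
  have ha : 1 < a := one_lt_goldenRatio.trans_le (goldenRatio_le_goldenRatio_sq_mul_one_sub hk)
  have haφ : a ≤ φ ^ 2 := mul_le_of_le_one_right (sq_nonneg φ) (sub_le_self _ (by positivity))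
  have hPa : Phi k a < 0 := Phi_goldenRatio_sq_mul_one_sub_neg hk
  have hPφ : 0 < Phi k (φ ^ 2) := Phi_goldenRatio_sq_pos hk1
  have bounds : ∀ γ : ℝ, 1 < γ → Phi k γ = 0 → a < γ ∧ γ < φ ^ 2 := by
    intro γ hγ1 hγ0
    have hγ : 0 < γ := zero_lt_one.trans hγ1
    exact ⟨(Phi_neg_iff_lt_of_Phi_eq_zero hk1 (zero_lt_one.trans ha) hγ hγ0).1 hPa,
      (Phi_pos_iff_lt_of_Phi_eq_zero hk1 (by positivity) hγ hγ0).1 hPφ⟩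
  obtain ⟨γ, hγ, hγ0⟩ :=
    intermediate_value_Icc haφ (continuous_Phi k).continuousOn ⟨hPa.le, hPφ.le⟩
  have hγ1 : 1 < γ := ha.trans_le hγ.1
  refine ⟨⟨γ, ⟨hγ1, hγ0⟩, fun δ hδ => ?_⟩, bounds⟩
  refine (strictMonoOn_Phi_div_pow hk1).injOn (zero_lt_one.trans hδ.1) (zero_lt_one.trans hγ1) ?_
  simp only [hδ.2, hγ0, zero_div]
end

section
/- For every integer k ≥ 2 and every integer n ≥ 1, the k-generalized Pell number satisfies γ^(n-2) ≤ P_n^(k) ≤ γ^(n-1), where γ = γ(k) is the dominant root of the characteristic polynomial of the k-generalized Pell sequence. -/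
/-- `IsGenPell k P` says that `P : ℤ → ℤ` is the k-generalized Pell sequence:
P_{-(k-2)} = ⋯ = P_0 = 0, P_1 = 1 and
P_n = 2P_{n-1} + P_{n-2} + ⋯ + P_{n-k} for n ≥ 2. -/
def IsGenPell (k : ℕ) (P : ℤ → ℤ) : Prop :=
  (∀ n : ℤ, 2 - (k : ℤ) ≤ n → n ≤ 0 → P n = 0) ∧ P 1 = 1 ∧
    ∀ n : ℤ, 2 ≤ n → P n = 2 * P (n - 1) + ∑ i ∈ Finset.Icc 2 k, P (n - (i : ℤ))

/-!
Since γ is a root of `Phi k`, each γ^(n-c) satisfies the Pell recurrence at every integer n. The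
recurrence has nonnegative coefficients, so a sub-solution lying below a super-solution on k
consecutive indices stays below it from then on. Comparing `P` with γ^(n-1) on the initial values
0, …, 0, 1 gives the upper bound. For the lower bound γ^(n-2) is positive where `P` vanishes, so
`P` is compared instead with the minorant equal to 0 for n ≤ 0, to 1 at n = 1 and to γ^(n-2) for
n ≥ 2. It is still a sub-solution: the terms γ^(-1) + ⋯ + γ^(-k) = 1 - γ^(-1) it drops below
index 2 are outweighed by its value 1 at n = 1.
-/

open Finset

noncomputable def pellStep (k : ℕ) (u : ℤ → ℝ) (n : ℤ) : ℝ :=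
  2 * u (n - 1) + ∑ m ∈ Ico (n - k) (n - 1), u m

lemma sum_Icc_two_sub_eq_sum_Ico {M : Type*} [AddCommMonoid M] (k : ℕ) (f : ℤ → M) (n : ℤ) :
    ∑ i ∈ Icc 2 k, f (n - i) = ∑ m ∈ Ico (n - k) (n - 1), f m := by
  refine sum_nbij' (fun i => n - i) (fun m => (n - m).toNat) ?_ ?_ ?_ ?_ (fun _ _ => rfl) <;>
    intro x hx <;> simp only [mem_Icc, mem_Ico] at hx ⊢ <;>
    omega

lemma pellStep_mono {k : ℕ} (hk : 1 ≤ k) {u v : ℤ → ℝ} {n : ℤ}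
    (h : ∀ m ∈ Ico (n - k) n, u m ≤ v m) : pellStep k u n ≤ pellStep k v n := by
  have h₁ : u (n - 1) ≤ v (n - 1) := h _ (mem_Ico.2 ⟨by omega, by omega⟩)
  have hsum : ∑ m ∈ Ico (n - k) (n - 1), u m ≤ ∑ m ∈ Ico (n - k) (n - 1), v m :=
    sum_le_sum fun m hm => h m (Ico_subset_Ico_right (by omega) hm)
  unfold pellStep
  linarith

theorem le_of_le_pellStep {k : ℕ} (hk : 1 ≤ k) {u v : ℤ → ℝ} {a : ℤ}
    (hu : ∀ n, a + k ≤ n → u n ≤ pellStep k u n)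
    (hv : ∀ n, a + k ≤ n → pellStep k v n ≤ v n)
    (hinit : ∀ n, a ≤ n → n < a + k → u n ≤ v n) (n : ℤ) (hn : a ≤ n) : u n ≤ v n := by
  suffices h : ∀ N : ℕ, ∀ n ∈ Ico a (a + N), u n ≤ v n from
    h ((n - a).toNat + 1) n (mem_Ico.2 ⟨hn, by omega⟩)
  intro N
  induction N with
  | zero => simp
  | succ N ih =>
    intro n hn
    rw [mem_Ico] at hn
    by_cases hlt : n < a + N
    · exact ih n (mem_Ico.2 ⟨hn.1, hlt⟩)
    by_cases hearly : n < a + k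
    · exact hinit n hn.1 hearly
    calc u n ≤ pellStep k u n := hu n (by omega)
      _ ≤ pellStep k v n :=
        pellStep_mono hk fun m hm => ih m (by simp only [mem_Ico] at hm ⊢; omega)
      _ ≤ v n := hv n (by omega)

section CharacteristicRoot

variable {k : ℕ} {γ : ℝ}

lemma one_le_of_Phi_eq_zero (hγ : Phi k γ = 0) : 1 ≤ k := by
  refine Nat.one_le_iff_ne_zero.2 ?_
  rintro rfl
  norm_num [Phi] at hγ

lemma sum_Ico_zpow_sub (hγ0 : γ ≠ 0) (k : ℕ) (c n : ℤ) :
    ∑ m ∈ Ico (n - k) (n - 1), γ ^ (m - c) = γ ^ (n - k - c) * ∑ j ∈ range (k - 1), γ ^ j := by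
  rw [mul_sum]
  symm
  refine sum_nbij' (fun j => n - k + j) (fun m => (m - (n - k)).toNat) ?_ ?_ ?_ ?_ ?_ <;>
    intro x hx <;> simp only [mem_range, mem_Ico] at hx ⊢
  all_goals try omega
  rw [← zpow_natCast, ← zpow_add₀ hγ0]
  ring_nf

lemma pellStep_zpow_sub (hγ0 : γ ≠ 0) (hγ : Phi k γ = 0) (c n : ℤ) :
    pellStep k (fun m => γ ^ (m - c)) n = γ ^ (n - c) := by
  have hk := one_le_of_Phi_eq_zero hγ
  have hΦ : γ ^ k = 2 * γ ^ (k - 1) + ∑ j ∈ range (k - 1), γ ^ j := by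
    unfold Phi at hγ
    linarith
  have h₀ : γ ^ (n - c) = γ ^ (n - k - c) * γ ^ k := by
    rw [← zpow_natCast, ← zpow_add₀ hγ0]
    ring_nf
  have h₁ : γ ^ (n - 1 - c) = γ ^ (n - k - c) * γ ^ (k - 1) := by
    rw [← zpow_natCast, ← zpow_add₀ hγ0, Nat.cast_sub hk]
    ring_nf
  show 2 * γ ^ (n - 1 - c) + _ = _
  rw [sum_Ico_zpow_sub hγ0, h₀, h₁, hΦ]
  ring

end CharacteristicRoot

noncomputable def pellMinorant (γ : ℝ) (m : ℤ) : ℝ :=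
  if m ≤ 0 then 0 else if m = 1 then 1 else γ ^ (m - 2)

section Minorant

variable {k : ℕ} {γ : ℝ}

lemma pellMinorant_of_two_le {m : ℤ} (hm : 2 ≤ m) : pellMinorant γ m = γ ^ (m - 2) := by
  rw [pellMinorant, if_neg (by omega), if_neg (by omega)]

lemma pellMinorant_nonneg (hγ : 0 ≤ γ) (m : ℤ) : 0 ≤ pellMinorant γ m := by
  unfold pellMinorant
  split_ifs <;> positivity

lemma zpow_sub_two_le_pellMinorant (hγ : 1 ≤ γ) {m : ℤ} (hm : 1 ≤ m) :
    γ ^ (m - 2) ≤ pellMinorant γ m := by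
  rcases hm.eq_or_lt with rfl | hm
  · simpa [pellMinorant] using zpow_le_one_of_nonpos₀ hγ (by norm_num : (1 : ℤ) - 2 ≤ 0)
  · exact (pellMinorant_of_two_le hm).ge

lemma sum_Ico_zpow_sub_two_le_one (hγ0 : 0 < γ) (hγ : Phi k γ = 0) {a : ℤ} (ha : 2 - k ≤ a) :
    ∑ m ∈ Ico a 2, γ ^ (m - 2) ≤ 1 := by
  have hchar : pellStep k (fun m => γ ^ (m - 2)) 2 = γ ^ (2 - 2 : ℤ) :=
    pellStep_zpow_sub hγ0.ne' hγ 2 2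
  simp only [pellStep] at hchar
  norm_num at hchar
  have hinv : 0 < γ⁻¹ := inv_pos.2 hγ0
  have hk := one_le_of_Phi_eq_zero hγ
  calc ∑ m ∈ Ico a 2, γ ^ (m - 2) ≤ ∑ m ∈ Ico (2 - k : ℤ) 2, γ ^ (m - 2) :=
        sum_le_sum_of_subset_of_nonneg (Ico_subset_Ico_left ha) fun _ _ _ => by positivity
    _ = ∑ m ∈ Ico (2 - k : ℤ) 1, γ ^ (m - 2) + γ ^ (1 - 2 : ℤ) :=
        (sum_Ico_add_eq_sum_Ico_add_one (show (2 - k : ℤ) ≤ 1 by omega)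
          (fun m : ℤ => γ ^ (m - 2))).symm
    _ ≤ 1 := by
      rw [show (1 - 2 : ℤ) = -1 by norm_num, zpow_neg_one]
      linarith

lemma pellMinorant_le_pellStep (hγ1 : 1 < γ) (hγ : Phi k γ = 0) {n : ℤ} (hn : 2 ≤ n) :
    pellMinorant γ n ≤ pellStep k (pellMinorant γ) n := by
  have hγ0 : 0 < γ := by linarith
  unfold pellStep
  rcases hn.eq_or_lt with rfl | hn
  · have := sum_nonneg fun m (_ : m ∈ Ico (2 - k : ℤ) (2 - 1)) => pellMinorant_nonneg hγ0.le m
    norm_num [pellMinorant] at this ⊢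
    linarith
  have hwindow : ∑ m ∈ Ico (n - k) (n - 1), γ ^ (m - 2)
      ≤ ∑ m ∈ Ico (n - k) (n - 1), pellMinorant γ m := by
    rcases le_or_gt (n - k) 1 with h | h
    · rw [← Ico_union_Ico_eq_Ico (b := 2) (by omega) (by omega),
        sum_union (Ico_disjoint_Ico_consecutive _ _ _),
        sum_union (Ico_disjoint_Ico_consecutive _ _ _)]
      refine add_le_add ?_ (le_of_eq (sum_congr rfl fun m hm =>
        (pellMinorant_of_two_le (mem_Ico.1 hm).1).symm))
      calc ∑ m ∈ Ico (n - k) 2, γ ^ (m - 2) ≤ 1 := sum_Ico_zpow_sub_two_le_one hγ0 hγ (by omega)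
        _ = pellMinorant γ 1 := by simp [pellMinorant]
        _ ≤ ∑ m ∈ Ico (n - k) 2, pellMinorant γ m :=
          single_le_sum (fun m _ => pellMinorant_nonneg hγ0.le m) (mem_Ico.2 ⟨h, by norm_num⟩)
    · exact le_of_eq (sum_congr rfl fun m hm =>
        (pellMinorant_of_two_le (by have := (mem_Ico.1 hm).1; omega)).symm)
  have hchar := pellStep_zpow_sub hγ0.ne' hγ 2 n
  simp only [pellStep] at hchar
  rw [pellMinorant_of_two_le hn.le, pellMinorant_of_two_le (by omega : 2 ≤ n - 1), ← hchar]
  linarith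

end Minorant

namespace IsGenPell

variable {k : ℕ} {P : ℤ → ℤ} {γ : ℝ}

lemma pellStep_eq (hP : IsGenPell k P) {n : ℤ} (hn : 2 ≤ n) :
    pellStep k (fun m => (P m : ℝ)) n = P n := by
  unfold pellStep
  rw [hP.2.2 n hn]
  push_cast
  rw [← sum_Icc_two_sub_eq_sum_Ico]

lemma le_zpow_sub_one (hP : IsGenPell k P) (hγ0 : 0 < γ) (hγ : Phi k γ = 0) {n : ℤ}
    (hn : 2 - k ≤ n) : (P n : ℝ) ≤ γ ^ (n - 1) := by
  refine le_of_le_pellStep (one_le_of_Phi_eq_zero hγ) (a := 2 - k)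
    (fun m hm => (hP.pellStep_eq (by omega)).ge)
    (fun m _ => (pellStep_zpow_sub hγ0.ne' hγ 1 m).le)
    (fun m h₁ h₂ => ?_) n hn
  rcases (show m ≤ 0 ∨ m = 1 by omega) with hm | rfl
  · rw [hP.1 m h₁ hm, Int.cast_zero]
    positivity
  · simp [hP.2.1]

lemma zpow_sub_two_le (hP : IsGenPell k P) (hγ1 : 1 < γ) (hγ : Phi k γ = 0) {n : ℤ}
    (hn : 1 ≤ n) : γ ^ (n - 2) ≤ P n := by
  have hk := one_le_of_Phi_eq_zero hγ
  refine (zpow_sub_two_le_pellMinorant hγ1.le hn).trans <|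
    le_of_le_pellStep hk (a := 2 - k)
      (fun m hm => pellMinorant_le_pellStep hγ1 hγ (by omega))
      (fun m hm => (hP.pellStep_eq (by omega)).le)
      (fun m h₁ h₂ => ?_) n (by omega)
  rcases (show m ≤ 0 ∨ m = 1 by omega) with hm | rfl
  · simp [pellMinorant, hm, hP.1 m h₁ hm]
  · simp [pellMinorant, hP.2.1]

end IsGenPell

theorem genPell_growth_general (k : ℕ) (P : ℤ → ℤ) (hP : IsGenPell k P)
    (γ : ℝ) (hγ1 : 1 < γ) (hγ : Phi k γ = 0) (n : ℤ) (hn : 1 ≤ n) :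
    γ ^ (n - 2) ≤ (P n : ℝ) ∧ (P n : ℝ) ≤ γ ^ (n - 1) := by
  have hk := one_le_of_Phi_eq_zero hγ
  exact ⟨hP.zpow_sub_two_le hγ1 hγ hn, hP.le_zpow_sub_one (by linarith) hγ (by omega)⟩

/-- For k ≥ 2 and n ≥ 1, γ^(n-2) ≤ P_n^(k) ≤ γ^(n-1), where γ is the dominant
root of the characteristic polynomial. -/
theorem genPell_growth (k : ℕ) (hk : 2 ≤ k) (P : ℤ → ℤ) (hP : IsGenPell k P)
    (γ : ℝ) (hγ1 : 1 < γ) (hγ : Phi k γ = 0) (n : ℤ) (hn : 1 ≤ n) :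
    γ ^ (n - 2) ≤ (P n : ℝ) ∧ (P n : ℝ) ≤ γ ^ (n - 1) :=
  genPell_growth_general k P hP γ hγ1 hγ n hn
end

section
/- For every integer k ≥ 2 and every integer n with 1 ≤ n ≤ k+1, the k-generalized Pell number satisfies P_n^(k) = F_{2n-1}, where F denotes the Fibonacci sequence. -/
open Finset

theorem Finset.sum_Icc_sub_telescope {M : Type*} [AddCommGroup M] (f : ℤ → M) (n : ℤ)
    {a b : ℕ} (hab : a ≤ b) :
    ∑ i ∈ Icc a b, (f (n + 1 - i) - f (n - i)) = f (n + 1 - a) - f (n - b) := by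
  induction b, hab using Nat.le_induction with
  | base => simp
  | succ b hab ih =>
    rw [sum_Icc_succ_top (by omega), ih]
    push_cast
    rw [show n + 1 - ((b : ℤ) + 1) = n - b by ring]
    abel

theorem Nat.fib_add_four_add_fib (m : ℕ) : fib (m + 4) + fib m = 3 * fib (m + 2) := by
  have h2 : fib (m + 2) = fib m + fib (m + 1) := fib_add_two
  have h3 : fib (m + 3) = fib (m + 1) + fib (m + 2) := fib_add_two
  have h4 : fib (m + 4) = fib (m + 2) + fib (m + 3) := fib_add_two
  omega

namespace IsGenPell

variable {k : ℕ} {P : ℤ → ℤ}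

theorem apply_two (hP : IsGenPell k P) : P 2 = 2 := by
  have hwindow : ∑ i ∈ Icc 2 k, P (2 - i) = 0 :=
    sum_eq_zero fun i hi ↦ hP.1 _ (by simp at hi; omega) (by simp at hi; omega)
  rw [hP.2.2 2 le_rfl, hwindow]
  norm_num [hP.2.1]

theorem apply_add_one_eq_three_mul_sub {n : ℤ} (hP : IsGenPell k P) (h2n : 2 ≤ n) (hnk : n ≤ k) :
    P (n + 1) = 3 * P n - P (n - 1) := by
  have hnext := hP.2.2 (n + 1) (by omega)
  have hcurr := hP.2.2 n h2n
  have hwindow := sum_Icc_sub_telescope P n (a := 2) (b := k) (by omega)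
  have hvanish : P (n - k) = 0 := hP.1 _ (by omega) (by omega)
  rw [sum_sub_distrib, hvanish, show n + 1 - ((2 : ℕ) : ℤ) = n - 1 by push_cast; ring] at hwindow
  rw [add_sub_cancel_right] at hnext
  linarith

theorem consecutive_eq_fib {m : ℕ} (hP : IsGenPell k P) (hm : m + 1 ≤ k) :
    P (m + 1) = Nat.fib (2 * m + 1) ∧ P (m + 2) = Nat.fib (2 * m + 3) := by
  induction m with
  | zero => simp [hP.2.1, hP.apply_two, Nat.fib_add_two]
  | succ m ih =>
    obtain ⟨h1, h2⟩ := ih (by omega)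
    have hrec := hP.apply_add_one_eq_three_mul_sub (n := m + 2) (by omega) (by omega)
    have hfib := Nat.fib_add_four_add_fib (2 * m + 1)
    constructor
    · rw [show 2 * (m + 1) + 1 = 2 * m + 3 by ring, ← h2]
      push_cast
      ring_nf
    · rw [show 2 * (m + 1) + 3 = 2 * m + 1 + 4 by ring]
      rw [show 2 * m + 1 + 2 = 2 * m + 3 by ring] at hfib
      push_cast
      rw [show (m : ℤ) + 1 + 2 = m + 2 + 1 by ring, hrec, show (m : ℤ) + 2 - 1 = m + 1 by ring,
        h1, h2]
      omega

end IsGenPell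

theorem genPell_eq_fib_general (k : ℕ) (P : ℤ → ℤ) (hP : IsGenPell k P)
    (n : ℕ) (hn1 : 1 ≤ n) (hn2 : n ≤ k + 1) :
    P (n : ℤ) = Nat.fib (2 * n - 1) := by
  rcases n with _ | _ | m
  · omega
  · simpa using hP.2.1
  · rw [show 2 * (m + 2) - 1 = 2 * m + 3 by omega]
    exact_mod_cast (hP.consecutive_eq_fib (m := m) (by omega)).2

/-- For k ≥ 2 and 1 ≤ n ≤ k + 1, P_n^(k) = F_{2n-1}. -/
theorem genPell_eq_fib (k : ℕ) (hk : 2 ≤ k) (P : ℤ → ℤ) (hP : IsGenPell k P)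
    (n : ℕ) (hn1 : 1 ≤ n) (hn2 : n ≤ k + 1) :
    P (n : ℤ) = Nat.fib (2 * n - 1) :=
  genPell_eq_fib_general k P hP n hn1 hn2
end

section
/- For every integer k ≥ 2, let γ = γ(k) be the dominant real root of x^k - 2x^{k-1} - ⋯ - x - 1 and let g_k(z) = (z-1)/((k+1)z^2 - 3kz + k - 1). Then 0.276 < g_k(γ) < 0.5. -/
/-!
Multiplying `Φ_{n+1}(x) = x^{n+1} - 2x^n - (1 + x + ⋯ + x^{n-1})` by `x - 1` collapses the
geometric sum, so a root `γ` satisfies `γ^n (γ² - 3γ + 1) = -1`. For `γ > 1` this gives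
`γ² - 3γ + 1 < 0`, which traps `γ` below `(3 + √5)/2 < 2.62`, and
`γ^n (γ - 1)(γ - 2) = γ^n - 1 > 0`, so `γ > 2`. With `k = n + 1` the denominator of `g_k(γ)`
equals `γ² - 1 - k/γ^n`. Since `k < 2^n < γ^n`, it lies strictly between `2(γ - 1)` and `γ² - 1`,
so `1/(γ + 1) < g_k(γ) < 1/2`, and `1/3.62 > 0.276`.
-/

theorem sub_one_mul_Phi_succ (n : ℕ) (x : ℝ) :
    (x - 1) * Phi (n + 1) x = x ^ n * (x ^ 2 - 3 * x + 1) + 1 := by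
  simp only [Phi, Nat.add_sub_cancel]
  linear_combination -geom_sum_mul x n

section Root

variable {n : ℕ} {γ : ℝ}

theorem pow_mul_eq_neg_one_of_Phi_eq_zero (hγ : Phi (n + 1) γ = 0) :
    γ ^ n * (γ ^ 2 - 3 * γ + 1) = -1 := by
  linear_combination (γ - 1) * hγ - sub_one_mul_Phi_succ n γ

theorem sq_sub_three_mul_add_one_neg_of_Phi_eq_zero (hγ1 : 1 < γ) (hγ : Phi (n + 1) γ = 0) :
    γ ^ 2 - 3 * γ + 1 < 0 := by
  have hpow : 0 < γ ^ n := by positivity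
  have := pow_mul_eq_neg_one_of_Phi_eq_zero hγ
  nlinarith

theorem lt_of_Phi_eq_zero (hγ1 : 1 < γ) (hγ : Phi (n + 1) γ = 0) : γ < 2.62 := by
  nlinarith [sq_sub_three_mul_add_one_neg_of_Phi_eq_zero hγ1 hγ]

theorem two_lt_of_Phi_eq_zero (hn : n ≠ 0) (hγ1 : 1 < γ) (hγ : Phi (n + 1) γ = 0) : 2 < γ := by
  have hpow : 1 < γ ^ n := one_lt_pow₀ hγ1 hn
  have hprod : γ ^ n * ((γ - 1) * (γ - 2)) = γ ^ n - 1 := by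
    linear_combination pow_mul_eq_neg_one_of_Phi_eq_zero hγ
  have : 0 < (γ - 1) * (γ - 2) := pos_of_mul_pos_right (by linarith) (by positivity)
  nlinarith

theorem natCast_succ_lt_of_Phi_eq_zero (hn : n ≠ 0) (hγ1 : 1 < γ) (hγ : Phi (n + 1) γ = 0) :
    (n + 1 : ℝ) < γ ^ n * (γ - 1) ^ 2 := by
  have h2 := two_lt_of_Phi_eq_zero hn hγ1 hγ
  have hsucc : (n + 1 : ℝ) ≤ 2 ^ n := by exact_mod_cast Nat.lt_two_pow_self
  have hpow : (2 : ℝ) ^ n < γ ^ n := pow_lt_pow_left₀ h2 zero_le_two hn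
  have hsq : 1 < (γ - 1) ^ 2 := by nlinarith
  nlinarith

theorem denominator_bounds_of_Phi_eq_zero (hn : n ≠ 0) (hγ1 : 1 < γ) (hγ : Phi (n + 1) γ = 0) :
    2 * (γ - 1) < γ ^ 2 - 1 + (n + 1) * (γ ^ 2 - 3 * γ + 1) ∧
      γ ^ 2 - 1 + (n + 1) * (γ ^ 2 - 3 * γ + 1) < γ ^ 2 - 1 := by
  have hquad := sq_sub_three_mul_add_one_neg_of_Phi_eq_zero hγ1 hγ
  refine ⟨?_, by nlinarith⟩
  have hscaled : γ ^ n * ((γ - 1) ^ 2 + (n + 1) * (γ ^ 2 - 3 * γ + 1))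
      = γ ^ n * (γ - 1) ^ 2 - (n + 1) := by
    linear_combination (n + 1 : ℝ) * pow_mul_eq_neg_one_of_Phi_eq_zero hγ
  have hpos : 0 < γ ^ n * ((γ - 1) ^ 2 + (n + 1) * (γ ^ 2 - 3 * γ + 1)) := by
    rw [hscaled]; linarith [natCast_succ_lt_of_Phi_eq_zero hn hγ1 hγ]
  nlinarith [pos_of_mul_pos_right hpos (by positivity)]

end Root

/-- For k ≥ 2 and γ the dominant root of Φ_k, with
g_k(z) = (z-1)/((k+1)z² - 3kz + k - 1), we have 0.276 < g_k(γ) < 0.5. -/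
theorem g_k_bounds (k : ℕ) (hk : 2 ≤ k) (γ : ℝ) (hγ1 : 1 < γ) (hγ : Phi k γ = 0) :
    0.276 < (γ - 1) / ((k + 1) * γ ^ 2 - 3 * k * γ + k - 1) ∧
      (γ - 1) / ((k + 1) * γ ^ 2 - 3 * k * γ + k - 1) < 0.5 := by
  obtain ⟨n, rfl⟩ : ∃ n, k = n + 1 := ⟨k - 1, by omega⟩
  have hlt := lt_of_Phi_eq_zero hγ1 hγ
  obtain ⟨hD_lower, hD_upper⟩ := denominator_bounds_of_Phi_eq_zero (by omega) hγ1 hγ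
  have hD : ((n + 1 : ℕ) + 1) * γ ^ 2 - 3 * (n + 1 : ℕ) * γ + (n + 1 : ℕ) - 1
      = γ ^ 2 - 1 + (n + 1) * (γ ^ 2 - 3 * γ + 1) := by push_cast; ring
  have hDpos : 0 < γ ^ 2 - 1 + (n + 1) * (γ ^ 2 - 3 * γ + 1) := by linarith
  rw [hD, lt_div_iff₀ hDpos, div_lt_iff₀ hDpos]
  constructor <;> nlinarith
end

section
/- If integers n ≥ k+2, k ≥ 2 and m ≥ 0 satisfy P_n^(k) = N_m, then 1.25n − 1.5 < m < 2.52n − 0.52. -/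
/-- The Narayana's cows sequence. -/
def narayana : ℕ → ℕ
  | 0 => 1
  | 1 => 1
  | 2 => 1
  | m + 3 => narayana (m + 2) + narayana m

open Finset

theorem narayana_le_pow {c : ℝ} (hc : 1 ≤ c) (hc3 : c ^ 2 + 1 ≤ c ^ 3) :
    ∀ m, (narayana m : ℝ) ≤ c ^ m
  | 0 => by simp [narayana]
  | 1 => by simpa [narayana]
  | 2 => by simpa [narayana] using one_le_pow₀ (n := 2) hc
  | m + 3 => calc
      (narayana (m + 3) : ℝ) = narayana (m + 2) + narayana m := by simp [narayana]
      _ ≤ c ^ (m + 2) + c ^ m :=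
        add_le_add (narayana_le_pow hc hc3 (m + 2)) (narayana_le_pow hc hc3 m)
      _ = c ^ m * (c ^ 2 + 1) := by ring
      _ ≤ c ^ m * c ^ 3 := by gcongr
      _ = c ^ (m + 3) := by ring

theorem pow_le_narayana_add_two {c : ℝ} (hc : 0 ≤ c) (hc3 : c ^ 3 ≤ c ^ 2 + 1) :
    ∀ m, c ^ m ≤ (narayana (m + 2) : ℝ)
  | 0 => by simp [narayana]
  | 1 => by norm_num [narayana]; nlinarith
  | 2 => by norm_num [narayana]; nlinarith
  | m + 3 => calc
      c ^ (m + 3) = c ^ m * c ^ 3 := by ring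
      _ ≤ c ^ m * (c ^ 2 + 1) := by gcongr
      _ = c ^ (m + 2) + c ^ m := by ring
      _ ≤ narayana (m + 4) + narayana (m + 2) :=
        add_le_add (pow_le_narayana_add_two hc hc3 (m + 2)) (pow_le_narayana_add_two hc hc3 m)
      _ = narayana (m + 3 + 2) := by simp [narayana]

theorem mul_lt_mul_of_pow_le_pow_of_pow_lt {R : Type*} [Semiring R] [LinearOrder R]
    [IsStrictOrderedRing R] {a b : R} {m t p q : ℕ} (ha : 1 ≤ a) (hb : 0 ≤ b) (ht : t ≠ 0)
    (h : a ^ m ≤ b ^ t) (hba : b ^ q < a ^ p) : q * m < p * t := by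
  by_contra! hle
  have := calc
    a ^ (p * t) ≤ a ^ (q * m) := pow_le_pow_right₀ ha hle
    _ = (a ^ m) ^ q := by rw [← pow_mul, mul_comm]
    _ ≤ (b ^ t) ^ q := pow_le_pow_left₀ (by positivity) h q
    _ = (b ^ q) ^ t := by rw [← pow_mul, ← pow_mul, mul_comm]
    _ < (a ^ p) ^ t := pow_lt_pow_left₀ hba (by positivity) ht
    _ = a ^ (p * t) := by rw [← pow_mul]
  exact this.false

theorem sum_Icc_two_sub_add_eq_add_sum {M : Type*} [AddCommMonoid M] (f : ℤ → M) (n : ℤ)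
    {k : ℕ} (hk : 1 ≤ k) :
    ∑ i ∈ Icc 2 k, f (n - i) + f (n - 1 - k) = f (n - 2) + ∑ i ∈ Icc 2 k, f (n - 1 - i) := by
  obtain ⟨j, rfl⟩ := Nat.exists_eq_add_of_le' hk
  simp only [← Ico_add_one_right_eq_Icc, sum_Ico_eq_sum_range, show j + 1 + 1 - 2 = j by omega]
  have h₁ := sum_range_succ (fun i : ℕ => f (n - 2 - i)) j
  have h₂ := sum_range_succ' (fun i : ℕ => f (n - 2 - i)) j
  push_cast at h₁ h₂ ⊢
  rw [add_comm (f (n - 2))]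
  convert h₁.symm.trans h₂ using 3 <;> ring_nf

namespace IsGenPell

variable {k : ℕ} {P : ℤ → ℤ}

theorem nonneg (hP : IsGenPell k P) (hk : 2 ≤ k) {n : ℤ} (hn : 2 - (k : ℤ) ≤ n) : 0 ≤ P n := by
  obtain ⟨hzero, hone, hrec⟩ := hP
  suffices ∀ t : ℕ, ∀ j : ℤ, 2 - (k : ℤ) ≤ j → j ≤ t → 0 ≤ P j from this n.toNat n hn (by omega)
  intro t
  induction t with
  | zero => intro j hj hj0; rw [hzero j hj (by simpa using hj0)]
  | succ t ih =>
    intro j hj hjt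
    rcases lt_trichotomy j 1 with hj1 | rfl | hj1
    · rw [hzero j hj (by omega)]
    · rw [hone]; norm_num
    · have hprev := ih (j - 1) (by omega) (by omega)
      have hsum : 0 ≤ ∑ i ∈ Icc 2 k, P (j - i) := sum_nonneg fun i hi => by
        have := mem_Icc.1 hi
        exact ih _ (by omega) (by omega)
      rw [hrec j hj1]
      omega

theorem two_mul_add_le (hP : IsGenPell k P) (hk : 2 ≤ k) {n : ℤ} (hn : 2 ≤ n) :
    2 * P (n - 1) + P (n - 2) ≤ P n := by
  rw [hP.2.2 n hn]
  gcongr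
  refine single_le_sum (f := fun i : ℕ => P (n - i)) (fun i hi => ?_) (by simpa using hk)
  have := mem_Icc.1 hi
  exact hP.nonneg hk (by omega)

theorem add_add_eq_three_mul (hP : IsGenPell k P) (hk : 2 ≤ k) {n : ℤ} (hn : 3 ≤ n) :
    P n + P (n - 2) + P (n - 1 - k) = 3 * P (n - 1) := by
  have h := sum_Icc_two_sub_add_eq_add_sum P n (by omega : 1 ≤ k)
  have h₁ := hP.2.2 n (by omega)
  have h₂ := hP.2.2 (n - 1) (by omega)
  rw [show n - 1 - 1 = n - 2 by ring] at h₂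
  linarith

theorem pow_le_apply_add_two (hP : IsGenPell k P) (hk : 2 ≤ k) {c : ℝ} (hc : 0 ≤ c)
    (hc2 : c ^ 2 ≤ 2 * c + 1) : ∀ t : ℕ, c ^ t ≤ (P (t + 2) : ℝ)
  | 0 => by norm_num [hP.apply_two]
  | 1 => by
    have h := hP.two_mul_add_le hk (n := 3) (by norm_num)
    norm_num [hP.apply_two, hP.2.1] at h ⊢
    have : (5 : ℝ) ≤ P 3 := by exact_mod_cast h
    nlinarith
  | t + 2 => by
    have h := hP.two_mul_add_le hk (n := t + 2 + 2) (by omega)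
    rw [show (t : ℤ) + 2 + 2 - 1 = (t + 1 : ℕ) + 2 by push_cast; ring,
      show (t : ℤ) + 2 + 2 - 2 = t + 2 by ring] at h
    have h₁ := hP.pow_le_apply_add_two hk hc hc2 (t + 1)
    have h₀ := hP.pow_le_apply_add_two hk hc hc2 t
    calc c ^ (t + 2) = c ^ t * c ^ 2 := by ring
      _ ≤ c ^ t * (2 * c + 1) := by gcongr
      _ = 2 * c ^ (t + 1) + c ^ t := by ring
      _ ≤ 2 * P ((t + 1 : ℕ) + 2) + P (t + 2) := by gcongr
      _ ≤ P ((t + 2 : ℕ) + 2) := by push_cast at h ⊢; exact_mod_cast h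

theorem apply_add_two_le_mul (hP : IsGenPell k P) (hk : 2 ≤ k) {d : ℝ} (hd : 2 ≤ d)
    (hd2 : 3 * d - 1 ≤ d ^ 2) : ∀ t : ℕ, (P (t + 2) : ℝ) ≤ d * P (t + 1)
  | 0 => by norm_num [hP.apply_two, hP.2.1, hd]
  | t + 1 => by
    have h := hP.add_add_eq_three_mul hk (n := t + 3) (by omega)
    rw [show (t : ℤ) + 3 - 2 = t + 1 by ring, show (t : ℤ) + 3 - 1 = t + 2 by ring] at h
    have hR := congrArg (Int.cast : ℤ → ℝ) h
    push_cast at hR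
    have ih := hP.apply_add_two_le_mul hk hd hd2 t
    have hP₂ : (0 : ℝ) ≤ P (t + 2) := mod_cast hP.nonneg hk (n := t + 2) (by omega)
    have hPk : (0 : ℝ) ≤ P (t + 2 - k) := mod_cast hP.nonneg hk (n := t + 2 - k) (by omega)
    push_cast
    rw [show (t : ℤ) + 1 + 2 = t + 3 by ring, show (t : ℤ) + 1 + 1 = t + 2 by ring]
    -- `d ((d - 3) P_{t+2} + P_{t+1}) ≥ (d² - 3d + 1) P_{t+2} ≥ 0` by the inductive hypothesis
    nlinarith [mul_nonneg (sub_nonneg.2 hd2) hP₂]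

theorem apply_add_one_le_pow (hP : IsGenPell k P) (hk : 2 ≤ k) {d : ℝ} (hd : 2 ≤ d)
    (hd2 : 3 * d - 1 ≤ d ^ 2) : ∀ t : ℕ, (P (t + 1) : ℝ) ≤ d ^ t
  | 0 => by simp [hP.2.1]
  | t + 1 => calc
      (P ((t + 1 : ℕ) + 1) : ℝ) = P (t + 2) := by push_cast; ring_nf
      _ ≤ d * P (t + 1) := hP.apply_add_two_le_mul hk hd hd2 t
      _ ≤ d * d ^ t := by gcongr; exact hP.apply_add_one_le_pow hk hd hd2 t
      _ = d ^ (t + 1) := by ring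

end IsGenPell

/-- If n ≥ k + 2, k ≥ 2, m ≥ 0 and P_n^(k) = N_m, then
1.25n − 1.5 < m < 2.52n − 0.52. -/
theorem genPell_eq_narayana_index_bounds (k : ℕ) (hk : 2 ≤ k) (P : ℤ → ℤ)
    (hP : IsGenPell k P) (n : ℤ) (hn : (k : ℤ) + 2 ≤ n) (m : ℕ)
    (h : P n = narayana m) :
    1.25 * (n : ℝ) - 1.5 < (m : ℝ) ∧ (m : ℝ) < 2.52 * (n : ℝ) - 0.52 := by
  obtain ⟨t, rfl⟩ : ∃ t : ℕ, n = t + 2 := ⟨(n - 2).toNat, by omega⟩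
  have ht : (2 : ℝ) ≤ t := by exact_mod_cast (by omega : 2 ≤ t)
  have hPN : (P (t + 2) : ℝ) = narayana m := by exact_mod_cast h
  push_cast
  constructor
  · have hpow : ((3 : ℝ) / 2) ^ (2 * t) ≤ (3 / 2) ^ m := calc
        ((3 : ℝ) / 2) ^ (2 * t) = (9 / 4) ^ t := by rw [pow_mul]; norm_num
        _ ≤ P (t + 2) := hP.pow_le_apply_add_two hk (by norm_num) (by norm_num) t
        _ = narayana m := hPN
        _ ≤ (3 / 2) ^ m := narayana_le_pow (by norm_num) (by norm_num) m
    have : ((2 * t : ℕ) : ℝ) ≤ m := by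
      exact_mod_cast (pow_le_pow_iff_right₀ (by norm_num)).1 hpow
    push_cast at this
    linarith
  · rcases lt_or_ge m 2 with hm | hm
    · have : (m : ℝ) ≤ 1 := by exact_mod_cast (by omega : m ≤ 1)
      linarith
    obtain ⟨j, rfl⟩ := Nat.exists_eq_add_of_le' hm
    have hpow : ((2931 : ℝ) / 2000) ^ j ≤ (2619 / 1000) ^ (t + 1) := calc
        ((2931 : ℝ) / 2000) ^ j ≤ narayana (j + 2) :=
          pow_le_narayana_add_two (by norm_num) (by norm_num) j
        _ = P ((t + 1 : ℕ) + 1) := by rw [← hPN]; push_cast; ring_nf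
        _ ≤ (2619 / 1000) ^ (t + 1) := hP.apply_add_one_le_pow hk (by norm_num) (by norm_num) _
    have : 100 * j < 252 * (t + 1) :=
      mul_lt_mul_of_pow_le_pow_of_pow_lt (by norm_num) (by norm_num) (by omega) hpow (by norm_num)
    have : (100 * j : ℝ) < 252 * (t + 1) := by exact_mod_cast this
    push_cast
    linarith
end

section
/- Let α be the real root of x^3 − x^2 − 1 and β, δ the complex conjugate pair of roots. Then |β| = |δ| < 0.83, and for every m ≥ 1, |C_β β^{m+2} + C_δ δ^{m+2}| < 1/2, where C_x = 1/(x^3 + 2). -/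
/-!
Write a non-real root of `x³ - x² - 1` as `z = x + iy`. The imaginary part of the equation,
divided by `y`, gives `y² = 3x² - 2x`; substituting into the real part leaves
`8x³ - 8x² + 2x + 1 = 0`, whose only real root is `x ≈ -0.2328`. Hence `|z|² = 4x² - 2x ≈ 0.682`,
and `|z³ + 2| = |z² + 3| ≥ Re (z² + 3) = 3 + 2x - 2x² > 2.4 > 4|z|³`. The two terms of the sum are
complex conjugates, so the sum is at most `2|z|^(m+2) / |z³ + 2| ≤ 2|z|³ / |z³ + 2| < 1/2`.
-/

open ComplexConjugate

namespace Narayana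

lemma im_sq_of_root {z : ℂ} (hz : z ^ 3 - z ^ 2 - 1 = 0) (him : z.im ≠ 0) :
    z.im ^ 2 = 3 * z.re ^ 2 - 2 * z.re := by
  have h := congrArg Complex.im hz
  simp only [pow_succ, pow_zero, one_mul, Complex.sub_im, Complex.mul_im, Complex.mul_re,
    Complex.one_im, Complex.zero_im] at h
  have : z.im * (3 * z.re ^ 2 - 2 * z.re - z.im ^ 2) = 0 := by linear_combination h
  linarith [(mul_eq_zero.mp this).resolve_left him]

lemma re_cubic_of_root {z : ℂ} (hz : z ^ 3 - z ^ 2 - 1 = 0) (him : z.im ≠ 0) :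
    8 * z.re ^ 3 - 8 * z.re ^ 2 + 2 * z.re + 1 = 0 := by
  have h := congrArg Complex.re hz
  simp only [pow_succ, pow_zero, one_mul, Complex.sub_re, Complex.mul_im, Complex.mul_re,
    Complex.one_re, Complex.zero_re] at h
  linear_combination -h + (1 - 3 * z.re) * im_sq_of_root hz him

lemma re_bounds_of_root {z : ℂ} (hz : z ^ 3 - z ^ 2 - 1 = 0) (him : z.im ≠ 0) :
    -0.234 < z.re ∧ z.re < 0 := by
  have h := re_cubic_of_root hz him
  constructor
  · nlinarith [sq_nonneg (z.re - 0.5), sq_nonneg (z.re + 0.234)]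
  · nlinarith [sq_nonneg (2 * z.re - 1)]

lemma normSq_of_root {z : ℂ} (hz : z ^ 3 - z ^ 2 - 1 = 0) (him : z.im ≠ 0) :
    Complex.normSq z = 4 * z.re ^ 2 - 2 * z.re := by
  rw [Complex.normSq_apply]
  linear_combination im_sq_of_root hz him

lemma norm_lt_of_root {z : ℂ} (hz : z ^ 3 - z ^ 2 - 1 = 0) (him : z.im ≠ 0) :
    ‖z‖ < 0.83 := by
  obtain ⟨hlo, hhi⟩ := re_bounds_of_root hz him
  have hsq : ‖z‖ ^ 2 < 0.83 ^ 2 := by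
    rw [Complex.sq_norm, normSq_of_root hz him]
    nlinarith
  exact abs_lt_of_sq_lt_sq' hsq (by norm_num) |>.2

lemma four_mul_norm_pow_three_lt_of_root {z : ℂ} (hz : z ^ 3 - z ^ 2 - 1 = 0)
    (him : z.im ≠ 0) : 4 * ‖z‖ ^ 3 < ‖z ^ 3 + 2‖ := by
  obtain ⟨hlo, hhi⟩ := re_bounds_of_root hz him
  have hre : (z ^ 3 + 2).re = 3 + 2 * z.re - 2 * z.re ^ 2 := by
    rw [show z ^ 3 + 2 = z ^ 2 + 3 by linear_combination hz]
    simp only [pow_two, Complex.add_re, Complex.mul_re, Complex.re_ofNat]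
    linear_combination -im_sq_of_root hz him
  have hcube : ‖z‖ ^ 3 < 0.83 ^ 3 := by
    gcongr
    exact norm_lt_of_root hz him
  calc 4 * ‖z‖ ^ 3 < 4 * 0.83 ^ 3 := by linarith
    _ < (z ^ 3 + 2).re := by rw [hre]; nlinarith
    _ ≤ ‖z ^ 3 + 2‖ := Complex.re_le_norm _

lemma norm_term_lt_of_root {z : ℂ} (hz : z ^ 3 - z ^ 2 - 1 = 0) (him : z.im ≠ 0)
    {m : ℕ} (hm : 1 ≤ m) : ‖1 / (z ^ 3 + 2) * z ^ (m + 2)‖ < 1 / 4 := by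
  have hlt := four_mul_norm_pow_three_lt_of_root hz him
  have hpos : 0 < ‖z ^ 3 + 2‖ := lt_of_le_of_lt (by positivity) hlt
  have hpow : ‖z‖ ^ (m + 2) ≤ ‖z‖ ^ 3 :=
    pow_le_pow_of_le_one (norm_nonneg z) (by linarith [norm_lt_of_root hz him]) (by omega)
  rw [norm_mul, norm_div, norm_one, norm_pow, one_div_mul_eq_div, div_lt_iff₀ hpos]
  linarith

end Narayana

theorem narayana_complex_roots_small_general (β δ : ℂ)
    (hβ : β ^ 3 - β ^ 2 - 1 = 0)
    (hconj : δ = (starRingEnd ℂ) β) (hnonreal : β.im ≠ 0) :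
    ‖β‖ = ‖δ‖ ∧ ‖β‖ < 0.83 ∧
      ∀ m : ℕ, 1 ≤ m →
        ‖1 / (β ^ 3 + 2) * β ^ (m + 2) + 1 / (δ ^ 3 + 2) * δ ^ (m + 2)‖
          < 1 / 2 := by
  subst hconj
  refine ⟨(Complex.norm_conj β).symm, Narayana.norm_lt_of_root hβ hnonreal, fun m hm => ?_⟩
  set w := 1 / (β ^ 3 + 2) * β ^ (m + 2)
  have hconj_term : 1 / (conj β ^ 3 + 2) * conj β ^ (m + 2) = conj w := by
    simp [w, map_ofNat]
  calc ‖w + 1 / (conj β ^ 3 + 2) * conj β ^ (m + 2)‖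
      ≤ ‖w‖ + ‖conj w‖ := hconj_term ▸ norm_add_le _ _
    _ = 2 * ‖w‖ := by rw [Complex.norm_conj]; ring
    _ < 1 / 2 := by linarith [Narayana.norm_term_lt_of_root hβ hnonreal hm]

/-- Let β, δ be the complex conjugate pair of (non-real) roots of x³ − x² − 1.
Then |β| = |δ| < 0.83 and |C_β β^{m+2} + C_δ δ^{m+2}| < 1/2 for all m ≥ 1,
where C_x = 1/(x³ + 2). -/
theorem narayana_complex_roots_small (β δ : ℂ)
    (hβ : β ^ 3 - β ^ 2 - 1 = 0) (hδ : δ ^ 3 - δ ^ 2 - 1 = 0)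
    (hconj : δ = (starRingEnd ℂ) β) (hnonreal : β.im ≠ 0) :
    ‖β‖ = ‖δ‖ ∧ ‖β‖ < 0.83 ∧
      ∀ m : ℕ, 1 ≤ m →
        ‖1 / (β ^ 3 + 2) * β ^ (m + 2) + 1 / (δ ^ 3 + 2) * δ ^ (m + 2)‖
          < 1 / 2 :=
  narayana_complex_roots_small_general β δ hβ hconj hnonreal
end

section
/- The minimal polynomial over ℤ of C_α = 1/(α^3 + 2), where α is the real root of x^3 − x^2 − 1, is 31x^3 − 31x^2 + 10x − 1, and all its roots lie strictly inside the unit circle. -/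
/-!
Using `α³ = α² + 1`, clearing denominators shows directly that `1/(α³ + 2)` is a root.
The cubic has constant coefficient `-1`, so it is primitive, and by Gauss's lemma it is
irreducible as soon as it has no rational root; a root `n/d` in lowest terms would give
`n³ + n²d + d³ ≡ 0 (mod 2)`, which forces `n` and `d` to be both even.
If a complex root `z` had `‖z‖ ≥ 1`, then `w = z⁻¹` would satisfy `w³ - 10w² + 31w - 31 = 0`
with `‖w‖ ≤ 1`. Writing this as `31(1 - w) = w²(w - 10)` gives `d := ‖1 - w‖ ≤ 11/31`, while
expanding around `1` gives `9 ≤ 14d + 7d² + d³`, which fails for such small `d`.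
-/

open Polynomial

noncomputable def cAlphaPoly : ℤ[X] := 31 * X ^ 3 - 31 * X ^ 2 + 10 * X - 1

theorem aeval_cAlphaPoly {A : Type*} [CommRing A] (x : A) :
    aeval x cAlphaPoly = 31 * x ^ 3 - 31 * x ^ 2 + 10 * x - 1 := by
  simp only [cAlphaPoly, map_sub, map_add, map_mul, map_pow, map_ofNat, aeval_X, map_one]

theorem cAlphaPoly_aeval_one_div_cube_add_two {K : Type*} [Field K] {α : K}
    (hα : α ^ 3 - α ^ 2 - 1 = 0) (h2 : α ^ 3 + 2 ≠ 0) :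
    aeval (1 / (α ^ 3 + 2)) cAlphaPoly = 0 := by
  rw [aeval_cAlphaPoly]
  field_simp
  linear_combination (-1 + α ^ 2 + 2 * α ^ 3 - α ^ 4 - α ^ 5 - α ^ 6) * hα

theorem Polynomial.isPrimitive_of_isUnit_coeff {R : Type*} [CommSemiring R] {p : R[X]} (n : ℕ)
    (h : IsUnit (p.coeff n)) : p.IsPrimitive :=
  fun r hr => isUnit_of_dvd_unit ((C_dvd_iff_dvd_coeff r p).mp hr n) h

theorem cAlphaPoly_isPrimitive : cAlphaPoly.IsPrimitive :=
  isPrimitive_of_isUnit_coeff 0 (by simp [cAlphaPoly, coeff_one])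

theorem cAlphaPoly_natDegree_map {R : Type*} [CommRing R] [CharZero R] :
    (cAlphaPoly.map (Int.castRingHom R)).natDegree = 3 := by
  simp only [cAlphaPoly, Polynomial.map_sub, Polynomial.map_add, Polynomial.map_mul,
    Polynomial.map_pow, map_X, Polynomial.map_ofNat, Polynomial.map_one]
  compute_degree!

theorem cAlphaPoly_homogenized_zmod_two_eq_zero (a b : ZMod 2)
    (h : 31 * a ^ 3 - 31 * a ^ 2 * b + 10 * a * b ^ 2 - b ^ 3 = 0) : a = 0 ∧ b = 0 := by
  revert a b
  decide

theorem cAlphaPoly_rat_ne_zero (r : ℚ) : 31 * r ^ 3 - 31 * r ^ 2 + 10 * r - 1 ≠ 0 := by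
  intro h
  have hint : 31 * r.num ^ 3 - 31 * r.num ^ 2 * r.den + 10 * r.num * r.den ^ 2
      - (r.den : ℤ) ^ 3 = 0 := by
    have hq : ((31 * r.num ^ 3 - 31 * r.num ^ 2 * r.den + 10 * r.num * r.den ^ 2
        - (r.den : ℤ) ^ 3 : ℤ) : ℚ) = 0 := by
      push_cast
      rw [← Rat.mul_den_eq_num]
      linear_combination (r.den : ℚ) ^ 3 * h
    exact_mod_cast hq
  have hmod := congrArg (Int.cast : ℤ → ZMod 2) hint
  push_cast at hmod
  obtain ⟨hnum, hden⟩ := cAlphaPoly_homogenized_zmod_two_eq_zero _ _ hmod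
  rw [ZMod.intCast_zmod_eq_zero_iff_dvd] at hnum
  rw [ZMod.natCast_eq_zero_iff] at hden
  have hcop : IsCoprime r.num r.den := by
    rw [Int.isCoprime_iff_gcd_eq_one]
    exact_mod_cast r.reduced
  exact absurd (hcop.isUnit_of_dvd' hnum (Int.natCast_dvd_natCast.mpr hden)) (by decide)

theorem cAlphaPoly_irreducible : Irreducible cAlphaPoly := by
  rw [IsPrimitive.Int.irreducible_iff_irreducible_map_cast cAlphaPoly_isPrimitive,
    irreducible_iff_roots_eq_zero_of_degree_le_three
      (by rw [cAlphaPoly_natDegree_map]; norm_num) (by rw [cAlphaPoly_natDegree_map]),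
    Multiset.eq_zero_iff_forall_notMem]
  intro r hr
  have hroot := (isRoot_of_mem_roots hr).eq_zero
  rw [eval_map, ← algebraMap_int_eq, ← aeval_def, aeval_cAlphaPoly] at hroot
  exact cAlphaPoly_rat_ne_zero r hroot

theorem cAlphaPoly_reverse_ne_zero_of_norm_le_one {w : ℂ} (hw : ‖w‖ ≤ 1) :
    w ^ 3 - 10 * w ^ 2 + 31 * w - 31 ≠ 0 := by
  intro h
  set d := ‖1 - w‖
  have hd_small : 31 * d ≤ 11 := by
    have hδ : 31 * (1 - w) = w ^ 2 * (w - 10) := by linear_combination -h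
    calc 31 * d = ‖w‖ ^ 2 * ‖w - 10‖ := by
          simpa [d, norm_mul, norm_pow] using congrArg norm hδ
      _ ≤ 1 * (1 + 10) := by
          gcongr
          · exact pow_le_one₀ (norm_nonneg w) hw
          · exact (norm_sub_le _ _).trans (by norm_num; linarith)
      _ = 11 := by norm_num
  have hd_large : 9 ≤ 14 * d + 7 * d ^ 2 + d ^ 3 := by
    have h9 : (9 : ℂ) = -(14 * (1 - w) + 7 * (1 - w) ^ 2 + (1 - w) ^ 3) := by
      linear_combination -h
    calc (9 : ℝ) = ‖14 * (1 - w) + 7 * (1 - w) ^ 2 + (1 - w) ^ 3‖ := by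
          rw [← norm_neg, ← h9]
          norm_num
      _ ≤ ‖14 * (1 - w)‖ + ‖7 * (1 - w) ^ 2‖ + ‖(1 - w) ^ 3‖ := norm_add₃_le
      _ = 14 * d + 7 * d ^ 2 + d ^ 3 := by simp [d, norm_pow]
  nlinarith [norm_nonneg (1 - w)]

theorem norm_lt_one_of_aeval_cAlphaPoly_eq_zero {z : ℂ} (hz : aeval z cAlphaPoly = 0) :
    ‖z‖ < 1 := by
  rw [aeval_cAlphaPoly] at hz
  by_contra! hz1
  have hz0 : z ≠ 0 := norm_pos_iff.mp (by linarith)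
  refine cAlphaPoly_reverse_ne_zero_of_norm_le_one (w := z⁻¹)
    (by simpa using inv_le_one_of_one_le₀ hz1) ?_
  field_simp
  linear_combination -hz

/-- The minimal polynomial over ℤ of C_α = 1/(α³ + 2), where α is the real root of
x³ − x² − 1, is 31x³ − 31x² + 10x − 1 (an irreducible primitive polynomial having
C_α as a root), and all of its (complex) roots lie strictly inside the unit circle. -/
theorem minpoly_C_alpha (α : ℝ) (hα : α ^ 3 - α ^ 2 - 1 = 0) :
    aeval (1 / (α ^ 3 + 2)) (31 * X ^ 3 - 31 * X ^ 2 + 10 * X - 1 : ℤ[X]) = 0 ∧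
      Irreducible (31 * X ^ 3 - 31 * X ^ 2 + 10 * X - 1 : ℤ[X]) ∧
      (31 * X ^ 3 - 31 * X ^ 2 + 10 * X - 1 : ℤ[X]).IsPrimitive ∧
      ∀ z : ℂ, aeval z (31 * X ^ 3 - 31 * X ^ 2 + 10 * X - 1 : ℤ[X]) = 0 →
        ‖z‖ < 1 := by
  show aeval (1 / (α ^ 3 + 2)) cAlphaPoly = 0 ∧ Irreducible cAlphaPoly ∧
    cAlphaPoly.IsPrimitive ∧ ∀ z : ℂ, aeval z cAlphaPoly = 0 → ‖z‖ < 1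
  have h2 : α ^ 3 + 2 ≠ 0 := by
    rw [show α ^ 3 + 2 = α ^ 2 + 3 by linear_combination hα]
    positivity
  exact ⟨cAlphaPoly_aeval_one_div_cube_add_two hα h2, cAlphaPoly_irreducible,
    cAlphaPoly_isPrimitive, fun _ => norm_lt_one_of_aeval_cAlphaPoly_eq_zero⟩
end

section
/- If m ≥ 1 is an integer, S ≥ (4m^2)^m, and x is a real number with x > e satisfying x/(log x)^m < S, then x < 2^m S (log S)^m. -/
/-!
Put `u = log x`. From `x < S u^m` we get `u < log S + m log u`, and the hypothesis on `S` gives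
`log S ≥ m log (4m²) = 2m log (2m)`. Since `u ↦ u - 2m log u` is increasing beyond `2m` and is
nonnegative at `u = 4m log (2m)`, any `u > 2 log S` would satisfy `m log u ≤ u / 2`, contradicting
`u < log S + m log u`. Hence `log x ≤ 2 log S`, and `x < S (log x)^m ≤ 2^m S (log S)^m`.
-/

open Real

namespace Real

lemma mul_log_le_self_of_le {c u₀ u : ℝ} (hc : 0 < c) (hcu₀ : c ≤ u₀) (hu₀ : c * log u₀ ≤ u₀)
    (hu : u₀ ≤ u) : c * log u ≤ u := by
  have hu₀_pos : 0 < u₀ := hc.trans_le hcu₀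
  have hlog : log u - log u₀ ≤ u / u₀ - 1 := by
    rw [← log_div (hu₀_pos.trans_le hu).ne' hu₀_pos.ne']
    exact log_le_sub_one_of_pos (div_pos (hu₀_pos.trans_le hu) hu₀_pos)
  have hslope : c * (u / u₀ - 1) ≤ u - u₀ := by
    rw [show c * (u / u₀ - 1) = c / u₀ * (u - u₀) by field_simp]
    exact mul_le_of_le_one_left (sub_nonneg.2 hu) ((div_le_one hu₀_pos).2 hcu₀)
  nlinarith

lemma mul_log_le_self_of_two_mul_mul_log_le {c u : ℝ} (hc₁ : 1 ≤ 2 * log c)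
    (hc₂ : 2 * log c ≤ c) (hu : 2 * c * log c ≤ u) : c * log u ≤ u := by
  have hc : 0 < c := by linarith
  refine mul_log_le_self_of_le hc (by nlinarith) ?_ hu
  have hlog : log (2 * c * log c) ≤ 2 * log c := by
    rw [mul_comm 2 c, mul_assoc, log_mul hc.ne' (by positivity)]
    linarith [log_le_log (by positivity) hc₂]
  nlinarith

lemma log_two_mul_le {m : ℝ} (hm : 1 ≤ m) : log (2 * m) ≤ m := by
  rw [log_mul two_ne_zero (by positivity)]
  linarith [log_two_lt_d9, log_le_sub_one_of_pos (zero_lt_one.trans_le hm)]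

lemma le_two_mul_of_lt_add_mul_log {m L u : ℝ} (hm : 1 ≤ m) (hL : m * log (4 * m ^ 2) ≤ L)
    (hu : u < L + m * log u) : u ≤ 2 * L := by
  have hlog_four : log (4 * m ^ 2) = 2 * log (2 * m) := by
    rw [show 4 * m ^ 2 = (2 * m) ^ 2 by ring, log_pow]
    push_cast
    ring
  by_contra! hLu
  have hmu : 2 * m * log u ≤ u := by
    refine mul_log_le_self_of_two_mul_mul_log_le ?_ (by linarith [log_two_mul_le hm]) ?_
    · linarith [log_two_gt_d9, log_le_log two_pos (by linarith : (2 : ℝ) ≤ 2 * m)]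
    · nlinarith
  linarith

end Real

/-- If m ≥ 1, S ≥ (4m²)^m and x > e satisfies x/(log x)^m < S, then
x < 2^m · S · (log S)^m. -/
theorem sanchez_luca_bound (m : ℕ) (hm : 1 ≤ m) (S x : ℝ)
    (hS : ((4 * m ^ 2 : ℝ)) ^ m ≤ S) (hx : Real.exp 1 < x)
    (h : x / (Real.log x) ^ m < S) :
    x < 2 ^ m * S * (Real.log S) ^ m := by
  have hx₀ : 0 < x := (exp_pos 1).trans hx
  have hlog_x : 1 < log x := (lt_log_iff_exp_lt hx₀).2 hx
  have hS₀ : 0 < S := lt_of_lt_of_le (by positivity) hS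
  have hx_lt : x < S * log x ^ m := (div_lt_iff₀ (by positivity)).1 h
  have hlog_lt : log x < log S + m * log (log x) := by
    rw [← log_pow, ← log_mul hS₀.ne' (by positivity)]
    exact log_lt_log hx₀ hx_lt
  have hlog_S : m * log (4 * m ^ 2) ≤ log S := by
    simpa only [log_pow] using log_le_log (by positivity) hS
  have hlog_le := le_two_mul_of_lt_add_mul_log (by exact_mod_cast hm) hlog_S hlog_lt
  calc x < S * log x ^ m := hx_lt
    _ ≤ S * (2 * log S) ^ m := by gcongr
    _ = 2 ^ m * S * log S ^ m := by ring
end
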